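/- arXiv:2503.07980 — 2 statements merged into one kernel-verified Lean document; each statement's English description precedes it below -/
import Mathlib

section
/- Let D = pdiag(d_1, d_2) be a 2×2 pseudo-diagonal matrix with d_1 ≤ d_2 and let k ≥ 2 be an integer. (1) If d_2 ≤ 0, then (D^k)_{ij} = 0 when i + j + k is even and (D^k)_{ij} = d_2 when i + j + k is odd. (2) If d_1 ≤ 0 ≤ d_2, then (D^k)_{11} = (k−2)d_2, (D^k)_{12} = (D^k)_{21} = (k−1)d_2, and (D^k)_{22} = k·d_2. (3) If 0 ≤ d_1, then (D^k)_{ii} = max(k·d_i, (k−2)d_2) for i = 1,2, and (D^k)_{12} = (D^k)_{21} = (k−1)d_2. -/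
open Finset

/-- Max-plus matrix product: `(A ⊗ B) i j = max_k (A i k + B k j)`. -/
noncomputable def mpMul {n : ℕ} [NeZero n] (A B : Fin n → Fin n → ℝ) :
    Fin n → Fin n → ℝ :=
  fun i j => univ.sup' univ_nonempty fun k => A i k + B k j

/-- `mpPow A k` is the `k`-th max-plus power of `A` (for `k ≥ 1`). -/
noncomputable def mpPow {n : ℕ} [NeZero n] (A : Fin n → Fin n → ℝ) (k : ℕ) :
    Fin n → Fin n → ℝ :=
  (mpMul A)^[k - 1] A

lemma sup'_fin2 (f : Fin 2 → ℝ) : univ.sup' univ_nonempty f = max (f 0) (f 1) := by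
  have h : (univ : Finset (Fin 2)) = {0, 1} := by decide
  rw [Finset.sup'_congr univ_nonempty h (fun x _ => rfl)]
  simp [Finset.sup'_insert]

lemma mpMul_apply (A B : Fin 2 → Fin 2 → ℝ) (i j : Fin 2) :
    mpMul A B i j = max (A i 0 + B 0 j) (A i 1 + B 1 j) := by
  rw [mpMul, sup'_fin2]

lemma mpPow_succ (A : Fin 2 → Fin 2 → ℝ) (k : ℕ) (hk : 1 ≤ k) :
    mpPow A (k + 1) = mpMul A (mpPow A k) := by
  obtain ⟨m, rfl⟩ := Nat.exists_eq_add_of_le hk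
  simp only [mpPow, Nat.add_sub_cancel_left, Nat.succ_sub_one]
  rw [show 1 + m = m + 1 by omega, Function.iterate_succ_apply']

noncomputable def par (d2 : ℝ) (m : ℕ) : ℝ := if Even m then 0 else d2

lemma par_succ_even (d2 : ℝ) {m : ℕ} (h : Even m) : par d2 m = 0 ∧ par d2 (m+1) = d2 := by
  constructor
  · simp [par, h]
  · simp [par, Nat.even_add_one, h]

lemma par_succ_odd (d2 : ℝ) {m : ℕ} (h : ¬ Even m) : par d2 m = d2 ∧ par d2 (m+1) = 0 := by
  constructor
  · simp [par, h]
  · simp [par, Nat.even_add_one, h]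

lemma case1 {d1 d2 : ℝ} (hd : d1 ≤ d2) (h2 : d2 ≤ 0) (D : Fin 2 → Fin 2 → ℝ)
    (h00 : D 0 0 = d1) (h01 : D 0 1 = 0) (h10 : D 1 0 = 0) (h11 : D 1 1 = d2) :
    ∀ k, 2 ≤ k → ∀ i j : Fin 2,
      mpPow D k i j = par d2 ((i : ℕ) + (j : ℕ) + k) := by
  have key0 : ∀ m : ℕ, max (d1 + par d2 m) (0 + par d2 (m+1)) = par d2 (m+1) := by
    intro m
    rcases Nat.even_or_odd m with h | h
    · obtain ⟨e1, e2⟩ := par_succ_even d2 h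
      rw [e1, e2, max_eq_right (by linarith), zero_add]
    · obtain ⟨e1, e2⟩ := par_succ_odd d2 (Nat.not_even_iff_odd.mpr h)
      rw [e1, e2, max_eq_right (by linarith), zero_add]
  have key1 : ∀ m : ℕ, max (0 + par d2 m) (d2 + par d2 (m+1)) = par d2 m := by
    intro m
    rcases Nat.even_or_odd m with h | h
    · obtain ⟨e1, e2⟩ := par_succ_even d2 h
      rw [e1, e2, max_eq_left (by linarith), zero_add]
    · obtain ⟨e1, e2⟩ := par_succ_odd d2 (Nat.not_even_iff_odd.mpr h)
      rw [e1, e2, max_eq_left (by linarith), zero_add]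
  have par2 : ∀ m : ℕ, par d2 (m + 2) = par d2 m := by
    intro m; simp [par, Nat.even_add]
  have pe : ∀ m : ℕ, Even m → par d2 m = 0 := fun m h => by simp [par, h]
  have po : ∀ m : ℕ, ¬ Even m → par d2 m = d2 := fun m h => by simp [par, h]
  intro k hk
  induction k, hk using Nat.le_induction with
  | base =>
    have h2p : mpPow D 2 = mpMul D D := rfl
    simp only [Fin.forall_fin_two, h2p, mpMul_apply, h00, h01, h10, h11,
      Fin.val_zero, Fin.val_one]
    refine ⟨⟨?_, ?_⟩, ?_, ?_⟩
    · rw [pe _ (by decide), max_eq_right (by linarith)]; norm_num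
    · rw [po _ (by decide), max_eq_right (by linarith)]; norm_num
    · rw [po _ (by decide), max_eq_right (by linarith)]; norm_num
    · rw [pe _ (by decide), max_eq_left (by linarith)]; norm_num
  | succ k hk ih =>
    have hih : ∀ i j : Fin 2, mpPow D (k+1) i j =
        max (D i 0 + par d2 ((0:Fin 2) + (j:ℕ) + k)) (D i 1 + par d2 ((1:Fin 2) + (j:ℕ) + k)) := by
      intro i j
      rw [mpPow_succ D k (by omega), mpMul_apply, ih 0 j, ih 1 j]
    simp only [Fin.forall_fin_two, hih, h00, h01, h10, h11, Fin.val_zero, Fin.val_one]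
    refine ⟨⟨?_, ?_⟩, ?_, ?_⟩
    · rw [show (0:ℕ)+0+(k+1) = (0+0+k)+1 from by omega, show (1:ℕ)+0+k = (0+0+k)+1 from by omega,
        key0]
    · rw [show (0:ℕ)+1+(k+1) = (0+1+k)+1 from by omega, show (1:ℕ)+1+k = (0+1+k)+1 from by omega,
        key0]
    · rw [show (1:ℕ)+0+k = (0+0+k)+1 from by omega,
        show (1:ℕ)+0+(k+1) = (0+0+k)+2 from by omega, par2, key1]
    · rw [show (1:ℕ)+1+k = (0+1+k)+1 from by omega,
        show (1:ℕ)+1+(k+1) = (0+1+k)+2 from by omega, par2, key1]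

lemma case2 {d1 d2 : ℝ} (hd : d1 ≤ d2) (h1 : d1 ≤ 0) (h2 : 0 ≤ d2)
    (D : Fin 2 → Fin 2 → ℝ)
    (h00 : D 0 0 = d1) (h01 : D 0 1 = 0) (h10 : D 1 0 = 0) (h11 : D 1 1 = d2) :
    ∀ k, 2 ≤ k →
      mpPow D k 0 0 = ((k : ℝ) - 2) * d2 ∧
      mpPow D k 0 1 = ((k : ℝ) - 1) * d2 ∧
      mpPow D k 1 0 = ((k : ℝ) - 1) * d2 ∧
      mpPow D k 1 1 = (k : ℝ) * d2 := by
  intro k hk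
  induction k, hk using Nat.le_induction with
  | base =>
    have h2p : mpPow D 2 = mpMul D D := rfl
    refine ⟨?_, ?_, ?_, ?_⟩ <;>
      rw [h2p, mpMul_apply] <;> simp only [h00, h01, h10, h11] <;>
      rw [max_eq_right (by linarith)] <;> push_cast <;> ring
  | succ k hk ih =>
    obtain ⟨i00, i01, i10, i11⟩ := ih
    refine ⟨?_, ?_, ?_, ?_⟩ <;>
      rw [mpPow_succ D k (by omega), mpMul_apply] <;> simp only [h00, h01, h10, h11] <;>
      [rw [i00, i10]; rw [i01, i11]; rw [i00, i10]; rw [i01, i11]] <;>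
      rw [max_eq_right (by linarith)] <;> push_cast <;> ring

lemma case3 {d1 d2 : ℝ} (hd : d1 ≤ d2) (h1 : 0 ≤ d1)
    (D : Fin 2 → Fin 2 → ℝ)
    (h00 : D 0 0 = d1) (h01 : D 0 1 = 0) (h10 : D 1 0 = 0) (h11 : D 1 1 = d2) :
    ∀ k, 2 ≤ k →
      mpPow D k 0 0 = max ((k : ℝ) * d1) (((k : ℝ) - 2) * d2) ∧
      mpPow D k 0 1 = ((k : ℝ) - 1) * d2 ∧
      mpPow D k 1 0 = ((k : ℝ) - 1) * d2 ∧
      mpPow D k 1 1 = (k : ℝ) * d2 := by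
  have h2 : (0:ℝ) ≤ d2 := le_trans h1 hd
  intro k hk
  induction k, hk using Nat.le_induction with
  | base =>
    have h2p : mpPow D 2 = mpMul D D := rfl
    refine ⟨?_, ?_, ?_, ?_⟩ <;> rw [h2p, mpMul_apply] <;> simp only [h00, h01, h10, h11]
    · push_cast; congr 1 <;> ring
    · rw [max_eq_right (by linarith)]; push_cast; ring
    · rw [max_eq_right (by linarith)]; push_cast; ring
    · rw [max_eq_right (by linarith)]; push_cast; ring
  | succ k hk ih =>
    obtain ⟨i00, i01, i10, i11⟩ := ih
    have hkd : (k:ℝ) * d1 ≤ (k:ℝ) * d2 :=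
      mul_le_mul_of_nonneg_left hd (by positivity)
    refine ⟨?_, ?_, ?_, ?_⟩ <;>
      rw [mpPow_succ D k (by omega), mpMul_apply] <;> simp only [h00, h01, h10, h11]
    · rw [i00, i10, ← max_add_add_left, max_assoc,
        max_eq_right (show d1 + ((k:ℝ)-2)*d2 ≤ 0 + ((k:ℝ)-1)*d2 by linarith)]
      push_cast; congr 1 <;> ring
    · rw [i01, i11, max_eq_right (by linarith)]; push_cast; ring
    · rw [i00, i10, zero_add,
        max_eq_right (max_le (by linarith) (by linarith))]
      push_cast; ring
    · rw [i01, i11, max_eq_right (by linarith)]; push_cast; ring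

/-- Powers of a `2 × 2` pseudo-diagonal matrix `D = pdiag(d₁, d₂)`
with `d₁ ≤ d₂`, for `k ≥ 2`.  Indices are 0-based, so the paper's parity condition
"`i + j + k` even" (`i, j ∈ {1, 2}`) coincides with "`(i : ℕ) + (j : ℕ) + k` even". -/
theorem mpPow_pseudoDiagonal_two {d1 d2 : ℝ} (hd : d1 ≤ d2)
    (D : Fin 2 → Fin 2 → ℝ)
    (hD : ∀ i j, D i j = if i = j then (if i = 0 then d1 else d2) else 0)
    (k : ℕ) (hk : 2 ≤ k) :
    (d2 ≤ 0 → ∀ i j : Fin 2,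
        mpPow D k i j = if Even ((i : ℕ) + (j : ℕ) + k) then 0 else d2) ∧
    (d1 ≤ 0 → 0 ≤ d2 →
        mpPow D k 0 0 = ((k : ℝ) - 2) * d2 ∧
        mpPow D k 0 1 = ((k : ℝ) - 1) * d2 ∧
        mpPow D k 1 0 = ((k : ℝ) - 1) * d2 ∧
        mpPow D k 1 1 = (k : ℝ) * d2) ∧
    (0 ≤ d1 →
        mpPow D k 0 0 = max ((k : ℝ) * d1) (((k : ℝ) - 2) * d2) ∧
        mpPow D k 1 1 = max ((k : ℝ) * d2) (((k : ℝ) - 2) * d2) ∧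
        mpPow D k 0 1 = ((k : ℝ) - 1) * d2 ∧
        mpPow D k 1 0 = ((k : ℝ) - 1) * d2) := by
  have h00 : D 0 0 = d1 := by rw [hD]; norm_num
  have h01 : D 0 1 = 0 := by rw [hD]; norm_num
  have h10 : D 1 0 = 0 := by rw [hD]; norm_num
  have h11 : D 1 1 = d2 := by rw [hD]; norm_num
  refine ⟨fun h2 i j => ?_, fun h1 h2 => case2 hd h1 h2 D h00 h01 h10 h11 k hk,
    fun h1 => ?_⟩
  · rw [case1 hd h2 D h00 h01 h10 h11 k hk i j]; rfl
  · obtain ⟨a, b, c, d⟩ := case3 hd h1 D h00 h01 h10 h11 k hk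
    have h2 : (0:ℝ) ≤ d2 := le_trans h1 hd
    exact ⟨a, by rw [d, max_eq_left (by linarith)], b, c⟩
end

section
/- Let A = (a_{ij}) ∈ ℝ^{n×n} be a pseudo-diagonalizable matrix with n ≥ 2 and max{a_{11},…,a_{nn}} ≤ 0. Then λ(A) = 0; the transitive closure satisfies Γ(A_λ) = I ⊕ A, i.e., (Γ(A_λ))_{ij} = a_{ij} for i ≠ j and (Γ(A_λ))_{ii} = 0; the eigenspace of A has dimension 1, and for any fixed i ∈ {1,…,n}, a basis of the eigenspace is given by the single vector g obtained from the i-th column of A by replacing its i-th entry with 0 (g_j = a_{ji} for j ≠ i, g_i = 0): the eigenvectors of A with real entries are exactly the vectors α + g with α ∈ ℝ, all with eigenvalue 0. -/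
open Finset

/-- `A` is pseudo-diagonalizable: similar, via a generalized permutation matrix given by a
permutation `π` and reals `p i`, to a pseudo-diagonal matrix `D` (a real matrix whose
off-diagonal entries are `0`). -/
def PseudoDiagonalizable {n : ℕ} (A : Fin n → Fin n → ℝ) : Prop :=
  ∃ (π : Equiv.Perm (Fin n)) (p : Fin n → ℝ) (D : Fin n → Fin n → ℝ),
    (∀ i j, i ≠ j → D i j = 0) ∧ ∀ i j, A i j = p i + D (π i) (π j) - p j

/-- The transitive closure `Γ(A) = A ⊕ A² ⊕ … ⊕ Aⁿ` (entrywise maximum). -/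
noncomputable def gammaClosure {n : ℕ} [NeZero n] (A : Fin n → Fin n → ℝ) :
    Fin n → Fin n → ℝ :=
  fun i j => (Finset.Icc 1 n).sup'
    (Finset.nonempty_Icc.mpr (Nat.one_le_iff_ne_zero.mpr (NeZero.ne n)))
    fun k => mpPow A k i j

/-- The weight of the cycle determined by a list `l` of distinct indices. -/
def cycleWeight {n : ℕ} (A : Fin n → Fin n → ℝ) (l : List (Fin n)) : ℝ :=
  ((l.zip (l.rotate 1)).map fun p => A p.1 p.2).sum

/-- The mean of a cycle: its weight divided by its length. -/
noncomputable def cycleMean {n : ℕ} (A : Fin n → Fin n → ℝ) (l : List (Fin n)) : ℝ :=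
  cycleWeight A l / l.length

/-- The maximum cycle mean `λ(A)`. -/
noncomputable def maxCycleMean {n : ℕ} (A : Fin n → Fin n → ℝ) : ℝ :=
  sSup {m | ∃ l : List (Fin n), l ≠ [] ∧ l.Nodup ∧ m = cycleMean A l}

/-!
Pseudo-diagonalizability gives a potential `p` with `A i j = p i - p j` off the diagonal, and
the sign condition on the diagonal upgrades this to `A i j ≤ p i - p j` everywhere. Every cycle
weight, and every entry of a max-plus power, is then bounded by the telescoping sum of `p`,
while two-cycles and single edges attain these bounds. For an eigenpair `(l, x)` put
`y = x - p`: the edge attaining the maximum in row `i` gives `y i + l ≤ y j`, which at a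
maximiser of `y` forces `l ≤ 0`; every off-diagonal edge gives `y j ≤ y i + l`, so two opposite
edges force `l ≥ 0`, and then `y` is constant.
-/

/-- The max-plus eigen-equation `A ⊗ x = l ⊗ x`. -/
def IsMaxPlusEigenpair {n : ℕ} [NeZero n] (A : Fin n → Fin n → ℝ) (l : ℝ) (x : Fin n → ℝ) :
    Prop :=
  ∀ i, (univ.sup' univ_nonempty fun j => A i j + x j) = l + x i

theorem PseudoDiagonalizable.exists_potential {n : ℕ} {A : Fin n → Fin n → ℝ}
    (hA : PseudoDiagonalizable A) : ∃ p : Fin n → ℝ, ∀ i j, i ≠ j → A i j = p i - p j := by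
  obtain ⟨π, p, D, hD, hAD⟩ := hA
  refine ⟨p, fun i j hij => ?_⟩
  rw [hAD, hD _ _ (π.injective.ne hij), add_zero]

section Potential

variable {n : ℕ} {A : Fin n → Fin n → ℝ} {p : Fin n → ℝ}

theorem cycleWeight_nonpos_of_le_sub (hle : ∀ i j, A i j ≤ p i - p j) (l : List (Fin n)) :
    cycleWeight A l ≤ 0 := by
  have hlen : l.length = (l.rotate 1).length := (l.length_rotate 1).symm
  have hfst := congrArg (List.map p) (List.map_fst_zip hlen.le)
  have hsnd := congrArg (List.map p) (List.map_snd_zip hlen.ge)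
  simp only [List.map_map, Function.comp_def] at hfst hsnd
  calc cycleWeight A l ≤ ((l.zip (l.rotate 1)).map fun q => p q.1 - p q.2).sum :=
        List.sum_le_sum fun q _ => hle q.1 q.2
    _ = (l.map p).sum - ((l.rotate 1).map p).sum := by
        rw [← hfst, ← hsnd]
        exact List.sum_hom₂ _ (· - ·) (fun a b c d => by ring) (sub_zero 0) _ _
    _ = 0 := by rw [((l.rotate_perm 1).map p).sum_eq, sub_self]

theorem cycleWeight_pair (A : Fin n → Fin n → ℝ) (i j : Fin n) :
    cycleWeight A [i, j] = A i j + A j i := by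
  simp [cycleWeight]

theorem maxCycleMean_eq_zero_of_le_sub (hle : ∀ i j, A i j ≤ p i - p j) {i j : Fin n}
    (hij : i ≠ j) (hcycle : A i j + A j i = 0) : maxCycleMean A = 0 := by
  have hbdd : ∀ m ∈ {m | ∃ l : List (Fin n), l ≠ [] ∧ l.Nodup ∧ m = cycleMean A l}, m ≤ 0 := by
    rintro m ⟨l, -, -, rfl⟩
    exact div_nonpos_of_nonpos_of_nonneg (cycleWeight_nonpos_of_le_sub hle l) (Nat.cast_nonneg _)
  have hmem : (0 : ℝ) ∈ {m | ∃ l : List (Fin n), l ≠ [] ∧ l.Nodup ∧ m = cycleMean A l} :=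
    ⟨[i, j], List.cons_ne_nil _ _, by simp [hij], by
      rw [cycleMean, cycleWeight_pair, hcycle, zero_div]⟩
  exact le_antisymm (Real.sSup_le hbdd le_rfl) (le_csSup ⟨0, hbdd⟩ hmem)

variable [NeZero n]

theorem mpPow_one (A : Fin n → Fin n → ℝ) : mpPow A 1 = A := rfl

theorem mpPow_two (A : Fin n → Fin n → ℝ) : mpPow A 2 = mpMul A A := rfl

theorem mpPow_le_sub (hle : ∀ i j, A i j ≤ p i - p j) (k : ℕ) (i j : Fin n) :
    mpPow A k i j ≤ p i - p j := by
  rw [mpPow]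
  induction k - 1 generalizing i j with
  | zero => exact hle i j
  | succ m ih =>
    rw [Function.iterate_succ_apply']
    exact sup'_le _ _ fun k _ => by linarith [hle i k, ih k j]

theorem gammaClosure_eq_self_of_eq_sub (hle : ∀ i j, A i j ≤ p i - p j) {i j : Fin n}
    (hij : A i j = p i - p j) : gammaClosure A i j = A i j := by
  refine le_antisymm (sup'_le _ _ fun k _ => hij ▸ mpPow_le_sub hle k i j) ?_
  have h1 : 1 ∈ Icc 1 n := mem_Icc.mpr ⟨le_rfl, NeZero.one_le⟩
  exact le_sup'_of_le (fun k => mpPow A k i j) h1 (by rw [mpPow_one])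

theorem gammaClosure_self_eq_zero (hn : 2 ≤ n) (hle : ∀ i j, A i j ≤ p i - p j) {i j : Fin n}
    (hcycle : A i j + A j i = 0) : gammaClosure A i i = 0 := by
  refine le_antisymm (sup'_le _ _ fun k _ => by simpa using mpPow_le_sub hle k i i) ?_
  have h2 : 2 ∈ Icc 1 n := mem_Icc.mpr ⟨one_le_two, hn⟩
  refine le_sup'_of_le (fun k => mpPow A k i i) h2 ?_
  rw [mpPow_two, ← hcycle]
  exact le_sup' (fun k => A i k + A k i) (mem_univ j)

theorem IsMaxPlusEigenpair.eigenvalue_nonpos {l : ℝ} {x : Fin n → ℝ}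
    (hx : IsMaxPlusEigenpair A l x) (hle : ∀ i j, A i j ≤ p i - p j) : l ≤ 0 := by
  obtain ⟨i, hi⟩ := Finite.exists_max fun j => x j - p j
  obtain ⟨j, -, hj⟩ := exists_mem_eq_sup' univ_nonempty fun j => A i j + x j
  have := hx i
  rw [hj] at this
  linarith [hle i j, hi j]

theorem IsMaxPlusEigenpair.sub_le {l : ℝ} {x : Fin n → ℝ} (hx : IsMaxPlusEigenpair A l x)
    {i j : Fin n} (hij : A i j = p i - p j) : x j - p j ≤ l + (x i - p i) := by
  have := hx i ▸ le_sup' (fun j => A i j + x j) (mem_univ j)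
  linarith

theorem isMaxPlusEigenpair_iff [Nontrivial (Fin n)] (hle : ∀ i j, A i j ≤ p i - p j)
    (hoff : ∀ i j, i ≠ j → A i j = p i - p j) (l : ℝ) (x : Fin n → ℝ) :
    IsMaxPlusEigenpair A l x ↔ l = 0 ∧ ∃ c, ∀ j, x j = c + p j := by
  constructor
  · intro hx
    have hdesc : ∀ i j, i ≠ j → x j - p j ≤ l + (x i - p i) :=
      fun i j hij => hx.sub_le (hoff i j hij)
    obtain ⟨i, j, hij⟩ := exists_pair_ne (Fin n)
    have hl : l = 0 :=
      le_antisymm (hx.eigenvalue_nonpos hle) (by linarith [hdesc i j hij, hdesc j i hij.symm])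
    refine ⟨hl, x i - p i, fun k => ?_⟩
    rcases eq_or_ne k i with rfl | hki
    · ring
    · linarith [hdesc i k hki.symm, hdesc k i hki]
  · rintro ⟨rfl, c, hc⟩ i
    obtain ⟨j, hji⟩ := exists_ne i
    refine le_antisymm (sup'_le _ _ fun k _ => ?_) ?_
    · linarith [hle i k, hc k, hc i]
    · refine le_sup'_of_le (fun k => A i k + x k) (mem_univ j) ?_
      linarith [hoff i j hji.symm, hc j, hc i]

end Potential

/-- Let `A` be pseudo-diagonalizable, `n ≥ 2`, with all diagonal entries
`≤ 0`.  Then `λ(A) = 0`; the transitive closure of `A_λ` (entries `A i j - λ(A)`)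
satisfies `Γ(A_λ) = I ⊕ A`, i.e. its off-diagonal entries are those of `A` and its
diagonal entries are `0`; and for any fixed `i₀`, letting `g` be the `i₀`-th column of
`A` with its `i₀`-th entry replaced by `0`, the real eigenvectors of `A` are exactly the
vectors `α + g`, `α ∈ ℝ`, all with eigenvalue `0`; in particular `g` is a basis of the
eigenspace, which therefore has dimension `1`. -/
theorem eigen_pseudoDiagonalizable_nonpos {n : ℕ} [NeZero n] (hn : 2 ≤ n)
    (A : Fin n → Fin n → ℝ) (hA : PseudoDiagonalizable A)
    (ha : ∀ i, A i i ≤ 0)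
    (Al : Fin n → Fin n → ℝ)
    (hAl : ∀ i j, Al i j = A i j - maxCycleMean A) :
    maxCycleMean A = 0 ∧
    (∀ i j, i ≠ j → gammaClosure Al i j = A i j) ∧
    (∀ i, gammaClosure Al i i = 0) ∧
    ∀ i0 : Fin n, ∀ g : Fin n → ℝ,
      (g i0 = 0 ∧ ∀ j, j ≠ i0 → g j = A j i0) →
      ∀ (x : Fin n → ℝ) (l : ℝ),
        (∀ i, (univ.sup' univ_nonempty fun j => A i j + x j) = l + x i) ↔
          (l = 0 ∧ ∃ α : ℝ, ∀ j, x j = α + g j) := by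
  have : Nontrivial (Fin n) := Fin.nontrivial_iff_two_le.mpr hn
  obtain ⟨p, hoff⟩ := hA.exists_potential
  have hle : ∀ i j, A i j ≤ p i - p j := fun i j => by
    rcases eq_or_ne i j with rfl | hij
    · simpa using ha i
    · exact (hoff i j hij).le
  have hcycle : ∀ i j, i ≠ j → A i j + A j i = 0 := fun i j hij => by
    rw [hoff i j hij, hoff j i hij.symm]; ring
  obtain ⟨i, j, hij⟩ := exists_pair_ne (Fin n)
  have hlam : maxCycleMean A = 0 := maxCycleMean_eq_zero_of_le_sub hle hij (hcycle i j hij)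
  obtain rfl : Al = A := funext₂ fun i j => by rw [hAl, hlam, sub_zero]
  refine ⟨hlam, fun i j hij => gammaClosure_eq_self_of_eq_sub hle (hoff i j hij), fun i => ?_, ?_⟩
  · obtain ⟨j, hji⟩ := exists_ne i
    exact gammaClosure_self_eq_zero hn hle (hcycle i j hji.symm)
  rintro i0 g ⟨hg0, hg⟩ x l
  have hgp : ∀ j, g j = p j - p i0 := fun j => by
    rcases eq_or_ne j i0 with rfl | hj
    · rw [hg0, sub_self]
    · rw [hg j hj, hoff j i0 hj]
  refine (isMaxPlusEigenpair_iff hle hoff l x).trans (and_congr_right fun _ => ?_)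
  constructor
  · rintro ⟨c, hc⟩
    exact ⟨c + p i0, fun j => by rw [hc, hgp]; ring⟩
  · rintro ⟨α, hα⟩
    exact ⟨α - p i0, fun j => by rw [hα, hgp]; ring⟩
end
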